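/- (Uniqueness of minimal rank decomposition) Let M be a P-module such that rk_M over Int(P) admits a rank decomposition (R,S). Then setting R_M := R − (R ∩ S) and S_M := S − (R ∩ S) (multiset differences) yields the unique minimal rank decomposition of rk_M, i.e., the unique rank decomposition with R_M and S_M disjoint. -/

import Mathlib

open scoped Classical

variable (k : Type) (P : Type) [Field k] [PartialOrder P]

/-- A pointwise (not necessarily finite-dimensional) persistence module over the poset `P`. -/
structure PersMod where
  V : P → Type
  [acg : ∀ p, AddCommGroup (V p)]
  [mod : ∀ p, Module k (V p)]
  φ : ∀ p q : P, p ≤ q → (V p →ₗ[k] V q)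
  φ_self : ∀ p : P, φ p p le_rfl = LinearMap.id
  φ_comp : ∀ (p q r : P) (hpq : p ≤ q) (hqr : q ≤ r),
    (φ q r hqr).comp (φ p q hpq) = φ p r (hpq.trans hqr)

attribute [instance] PersMod.acg PersMod.mod

variable {k P}

namespace PersMod

lemma φ_self_apply (M : PersMod k P) (p : P) (v : M.V p) : M.φ p p le_rfl v = v := by
  rw [M.φ_self]; rfl

lemma φ_comp_apply (M : PersMod k P) (p q r : P) (hpq : p ≤ q) (hqr : q ≤ r) (v : M.V p) :
    M.φ q r hqr (M.φ p q hpq v) = M.φ p r (hpq.trans hqr) v := by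
  rw [← M.φ_comp p q r hpq hqr]; rfl

/-- The submodule of sections of `M` over a subset `I ⊆ P`. -/
def sections (M : PersMod k P) (I : Set P) : Submodule k (∀ p : I, M.V p) where
  carrier := {ℓ | ∀ (p q : I) (h : (p : P) ≤ (q : P)), M.φ p q h (ℓ p) = ℓ q}
  add_mem' := by
    intro a b ha hb p q h
    simp only [Pi.add_apply, map_add, ha p q h, hb p q h]
  zero_mem' := by
    intro p q h
    simp only [Pi.zero_apply, map_zero]
  smul_mem' := by
    intro c a ha p q h
    simp only [Pi.smul_apply, map_smul, ha p q h]

/-- The relations submodule used to present the colimit of `M` over `I`. -/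
noncomputable def colimRel (M : PersMod k P) (I : Set P) :
    Submodule k (Π₀ p : I, M.V p) :=
  Submodule.span k {x | ∃ (p q : I) (h : (p : P) ≤ (q : P)) (v : M.V p),
    x = DFinsupp.lsingle (R := k) p v - DFinsupp.lsingle (R := k) q (M.φ p q h v)}

/-- The canonical limit-to-colimit map of `M` over `I`, based at `p0 ∈ I`. -/
noncomputable def limToColim (M : PersMod k P) (I : Set P) (p0 : P) (hp : p0 ∈ I) :
    (M.sections I) →ₗ[k] (Π₀ p : I, M.V p) ⧸ M.colimRel I :=
  (M.colimRel I).mkQ ∘ₗ (DFinsupp.lsingle (R := k) (⟨p0, hp⟩ : I)) ∘ₗ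
    (LinearMap.proj (⟨p0, hp⟩ : I)) ∘ₗ (M.sections I).subtype

/-- The generalized rank of `M` over `I`, based at `p0 ∈ I`. -/
noncomputable def rkAt (M : PersMod k P) (I : Set P) (p0 : P) (hp : p0 ∈ I) : ℕ :=
  Module.finrank k (LinearMap.range (M.limToColim I p0 hp))

/-- The generalized rank of `M` over `I` (with a choice of basepoint; for a connected
subposet `I` this is independent of the basepoint). -/
noncomputable def rk (M : PersMod k P) (I : Set P) : ℕ :=
  if h : I.Nonempty then M.rkAt I h.choose h.choose_spec else 0

end PersMod

/-- One step of a zigzag inside `I`. -/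
def zigStep (I : Set P) (a b : P) : Prop := a ∈ I ∧ b ∈ I ∧ (a ≤ b ∨ b ≤ a)

/-- `I` is a connected subposet of `P`. -/
def IsConnectedPoset (I : Set P) : Prop :=
  I.Nonempty ∧ ∀ a ∈ I, ∀ b ∈ I, Relation.ReflTransGen (zigStep I) a b

/-- `I` is a convex subset of `P`. -/
def IsConvexPoset (I : Set P) : Prop :=
  ∀ ⦃a b c : P⦄, a ∈ I → c ∈ I → a ≤ b → b ≤ c → b ∈ I

/-- `I` is an interval of `P`: nonempty, convex and connected. -/
def IsIntervalPoset (I : Set P) : Prop := IsConvexPoset I ∧ IsConnectedPoset I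

namespace PersMod

/-- Isomorphism of persistence modules. -/
structure Iso (M N : PersMod k P) where
  e : ∀ p : P, M.V p ≃ₗ[k] N.V p
  comm : ∀ (p q : P) (h : p ≤ q) (v : M.V p), e q (M.φ p q h v) = N.φ p q h (e p v)

/-- Binary direct sum of persistence modules. -/
def dSum (M N : PersMod k P) : PersMod k P where
  V p := M.V p × N.V p
  φ p q h := (M.φ p q h).prodMap (N.φ p q h)
  φ_self p := by
    show (M.φ p p le_rfl).prodMap (N.φ p p le_rfl) = LinearMap.id
    apply LinearMap.ext
    rintro ⟨a, b⟩
    simp [M.φ_self_apply, N.φ_self_apply]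
  φ_comp p q r hpq hqr := by
    show ((M.φ q r hqr).prodMap (N.φ q r hqr)).comp ((M.φ p q hpq).prodMap (N.φ p q hpq)) = _
    apply LinearMap.ext
    rintro ⟨a, b⟩
    simp [M.φ_comp_apply, N.φ_comp_apply]

/-- Direct sum of an arbitrary family of persistence modules. -/
noncomputable def famSum {ι : Type} (Mf : ι → PersMod k P) : PersMod k P where
  V p := Π₀ i, (Mf i).V p
  φ p q h := DFinsupp.mapRange.linearMap (fun i => (Mf i).φ p q h)
  φ_self p := by
    show DFinsupp.mapRange.linearMap (fun i => (Mf i).φ p p le_rfl) = LinearMap.id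
    have : (fun i => (Mf i).φ p p le_rfl) = fun i => (LinearMap.id : (Mf i).V p →ₗ[k] (Mf i).V p) := by
      funext i; exact (Mf i).φ_self p
    rw [this, DFinsupp.mapRange.linearMap_id]
  φ_comp p q r hpq hqr := by
    show (DFinsupp.mapRange.linearMap (fun i => (Mf i).φ q r hqr)).comp
        (DFinsupp.mapRange.linearMap (fun i => (Mf i).φ p q hpq)) =
      DFinsupp.mapRange.linearMap (fun i => (Mf i).φ p r (hpq.trans hqr))
    rw [← DFinsupp.mapRange.linearMap_comp]
    congr 1
    funext i
    exact (Mf i).φ_comp p q r hpq hqr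

/-- `M` is a trivial (zero) persistence module. -/
def IsTrivial (M : PersMod k P) : Prop := ∀ p : P, Subsingleton (M.V p)

/-- `M` is indecomposable. -/
def Indecomposable (M : PersMod k P) : Prop :=
  ¬ M.IsTrivial ∧
    ∀ N₁ N₂ : PersMod k P, Nonempty (Iso M (dSum N₁ N₂)) → N₁.IsTrivial ∨ N₂.IsTrivial

end PersMod

/-- The fibers of the interval module. -/
noncomputable def kSub (I : Set P) (p : P) : Submodule k k := if p ∈ I then ⊤ else ⊥

/-- The interval module `k_I` supported on a convex subset `I`. -/
noncomputable def kMod (I : Set P) (hI : IsConvexPoset I) : PersMod k P where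
  V p := ↥(kSub (k := k) I p)
  φ p q _h := LinearMap.codRestrict _
    ((if p ∈ I ∧ q ∈ I then (1 : k) else 0) • (Submodule.subtype (kSub (k := k) I p)))
    (by
      intro x
      by_cases hq : q ∈ I
      · simp [kSub, hq]
      · have hpq : ¬ (p ∈ I ∧ q ∈ I) := fun h => hq h.2
        rw [if_neg hpq, zero_smul, LinearMap.zero_apply]; exact Submodule.zero_mem _)
  φ_self p := by
    apply LinearMap.ext
    intro x
    apply Subtype.ext
    by_cases hp : p ∈ I
    · simp [hp]
    · have hx : (x : k) = 0 := by
        have := x.2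
        simp only [kSub, if_neg hp, Submodule.mem_bot] at this
        exact this
      simp [hp, hx]
  φ_comp p q r hpq hqr := by
    apply LinearMap.ext
    intro x
    apply Subtype.ext
    by_cases hp : p ∈ I
    · by_cases hr : r ∈ I
      · have hq : q ∈ I := hI hp hr hpq hqr
        simp [hp, hq, hr]
      · have h1 : ¬ (q ∈ I ∧ r ∈ I) := fun h => hr h.2
        have h2 : ¬ (p ∈ I ∧ r ∈ I) := fun h => hr h.2
        simp [h1, h2]
    · have hx : (x : k) = 0 := by
        have := x.2
        simp only [kSub, if_neg hp, Submodule.mem_bot] at this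
        exact this
      have h1 : ¬ (p ∈ I ∧ q ∈ I) := fun h => hp h.1
      have h2 : ¬ (p ∈ I ∧ r ∈ I) := fun h => hp h.1
      by_cases h3 : q ∈ I ∧ r ∈ I <;> simp [h1, h2, h3, hx]

/-- A pointwisely finite multiset of intervals of `P`, given by its multiplicity function. -/
def PWFMult (ρ : Set P → ℕ) : Prop :=
  (∀ X : Set P, ρ X ≠ 0 → IsIntervalPoset X) ∧
    ∀ p : P, {X : Set P | p ∈ X ∧ ρ X ≠ 0}.Finite

/-- The number of members (with multiplicity) of the multiset `ρ` containing `I`; this is the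
generalized rank invariant of the associated interval-decomposable module at `I`. -/
noncomputable def cntMult (ρ : Set P → ℕ) (I : Set P) : ℕ :=
  ∑ᶠ X ∈ {X : Set P | I ⊆ X}, ρ X

/-- `(ρR, ρS)` is a rank decomposition of the generalized rank invariant of `M` over the
intervals of `P`. -/
def IsRkDecomp (M : PersMod k P) (ρR ρS : Set P → ℕ) : Prop :=
  PWFMult ρR ∧ PWFMult ρS ∧
    ∀ I : Set P, IsIntervalPoset I → (M.rk I : ℤ) = (cntMult ρR I : ℤ) - (cntMult ρS I : ℤ)

lemma cntMult_add_of_finite {A B : Set P → ℕ}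
    (hA : ∀ p : P, {X : Set P | p ∈ X ∧ A X ≠ 0}.Finite)
    (hB : ∀ p : P, {X : Set P | p ∈ X ∧ B X ≠ 0}.Finite)
    {I : Set P} (hI : I.Nonempty) :
    cntMult (fun X => A X + B X) I = cntMult A I + cntMult B I := by
  obtain ⟨p, hp⟩ := hI
  have hA' : ({X : Set P | I ⊆ X} ∩ Function.support A).Finite :=
    (hA p).subset (fun X hX => ⟨hX.1 hp, hX.2⟩)
  have hB' : ({X : Set P | I ⊆ X} ∩ Function.support B).Finite :=
    (hB p).subset (fun X hX => ⟨hX.1 hp, hX.2⟩)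
  exact finsum_mem_add_distrib' hA' hB'

lemma cntMult_eq_of_intervals {A B : Set P → ℕ}
    (hA1 : ∀ X, A X ≠ 0 → IsIntervalPoset X)
    (hA2 : ∀ p : P, {X : Set P | p ∈ X ∧ A X ≠ 0}.Finite)
    (hB1 : ∀ X, B X ≠ 0 → IsIntervalPoset X)
    (hB2 : ∀ p : P, {X : Set P | p ∈ X ∧ B X ≠ 0}.Finite)
    (h : ∀ I : Set P, IsIntervalPoset I → cntMult A I = cntMult B I) :
    A = B := by
  by_contra hne
  obtain ⟨X0, hX0⟩ : ∃ X, A X ≠ B X := by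
    by_contra hc
    push_neg at hc
    exact hne (funext hc)
  have hint0 : IsIntervalPoset X0 := by
    by_cases h0 : A X0 = 0
    · exact hB1 X0 (by omega)
    · exact hA1 X0 h0
  obtain ⟨p, hp⟩ := hint0.2.1
  set S := {X : Set P | X0 ⊆ X ∧ A X ≠ B X} with hS
  have hSfin : S.Finite := by
    refine ((hA2 p).union (hB2 p)).subset ?_
    rintro X ⟨h1, h2⟩
    by_cases h0 : A X = 0
    · exact Or.inr ⟨h1 hp, by omega⟩
    · exact Or.inl ⟨h1 hp, h0⟩
  obtain ⟨X1, hX1S, hmax⟩ := Set.Finite.exists_maximal hSfin ⟨X0, subset_rfl, hX0⟩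
  have hint1 : IsIntervalPoset X1 := by
    by_cases h0 : A X1 = 0
    · exact hB1 X1 (by have := hX1S.2; omega)
    · exact hA1 X1 h0
  have hp1 : p ∈ X1 := hX1S.1 hp
  have hkey : ∀ X, X1 ⊆ X → X ≠ X1 → A X = B X := by
    intro X hsub hne'
    by_contra hAB
    exact hne' (Set.Subset.antisymm (hmax ⟨hX1S.1.trans hsub, hAB⟩ hsub) hsub)
  have hfin : ({X : Set P | X1 ⊆ X} ∩
      (Function.support A ∪ Function.support B)).Finite := by
    refine ((hA2 p).union (hB2 p)).subset ?_
    rintro X ⟨h1, h2⟩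
    rcases h2 with h2 | h2
    · exact Or.inl ⟨h1 hp1, h2⟩
    · exact Or.inr ⟨h1 hp1, h2⟩
  set T := hfin.toFinset with hT
  have hTA : cntMult A X1 = ∑ X ∈ T, A X := by
    refine finsum_mem_eq_sum_of_inter_support_eq _ ?_
    rw [hT, Set.Finite.coe_toFinset]
    ext X
    simp only [Set.mem_inter_iff, Set.mem_setOf_eq, Set.mem_union, Function.mem_support]
    tauto
  have hTB : cntMult B X1 = ∑ X ∈ T, B X := by
    refine finsum_mem_eq_sum_of_inter_support_eq _ ?_
    rw [hT, Set.Finite.coe_toFinset]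
    ext X
    simp only [Set.mem_inter_iff, Set.mem_setOf_eq, Set.mem_union, Function.mem_support]
    tauto
  have hX1T : X1 ∈ T := by
    rw [hT, Set.Finite.mem_toFinset]
    refine ⟨Set.mem_setOf.mpr subset_rfl, ?_⟩
    simp only [Set.mem_union, Function.mem_support]
    have := hX1S.2
    omega
  have hsum : ∑ X ∈ T, A X = ∑ X ∈ T, B X := by
    rw [← hTA, ← hTB]; exact h X1 hint1
  rw [← Finset.add_sum_erase _ A hX1T, ← Finset.add_sum_erase _ B hX1T] at hsum
  have herase : ∑ X ∈ T.erase X1, A X = ∑ X ∈ T.erase X1, B X := by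
    refine Finset.sum_congr rfl (fun X hX => ?_)
    have h1 := Finset.mem_of_mem_erase hX
    rw [hT, Set.Finite.mem_toFinset] at h1
    exact hkey X h1.1 (Finset.ne_of_mem_erase hX)
  exact hX1S.2 (by omega)

/-- If `rk_M` over `Int(P)` admits a rank decomposition `(R,S)`, then removing the common part
`R ∩ S` yields a rank decomposition with disjoint parts, and it is the unique minimal
(disjoint) rank decomposition of `rk_M`. -/
theorem minimal_rank_decomposition_unique
    (M : PersMod k P) (ρR ρS : Set P → ℕ) (h : IsRkDecomp M ρR ρS) :
    IsRkDecomp M (fun X => ρR X - min (ρR X) (ρS X)) (fun X => ρS X - min (ρR X) (ρS X)) ∧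
    (∀ X : Set P, min (ρR X - min (ρR X) (ρS X)) (ρS X - min (ρR X) (ρS X)) = 0) ∧
    ∀ τR τS : Set P → ℕ, IsRkDecomp M τR τS → (∀ X : Set P, min (τR X) (τS X) = 0) →
      τR = (fun X => ρR X - min (ρR X) (ρS X)) ∧
        τS = (fun X => ρS X - min (ρR X) (ρS X)) := by
  obtain ⟨hR, hS, heq⟩ := h
  set m : Set P → ℕ := fun X => min (ρR X) (ρS X) with hm
  set ρR' : Set P → ℕ := fun X => ρR X - m X with hρR'
  set ρS' : Set P → ℕ := fun X => ρS X - m X with hρS'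
  -- basic support / finiteness facts
  have hR'int : ∀ X, ρR' X ≠ 0 → IsIntervalPoset X := fun X hX =>
    hR.1 X (by simp only [hρR'] at hX; omega)
  have hS'int : ∀ X, ρS' X ≠ 0 → IsIntervalPoset X := fun X hX =>
    hS.1 X (by simp only [hρS'] at hX; omega)
  have hR'fin : ∀ p : P, {X : Set P | p ∈ X ∧ ρR' X ≠ 0}.Finite := fun p =>
    (hR.2 p).subset (fun X hX => ⟨hX.1, by have := hX.2; simp only [hρR'] at this; omega⟩)
  have hS'fin : ∀ p : P, {X : Set P | p ∈ X ∧ ρS' X ≠ 0}.Finite := fun p =>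
    (hS.2 p).subset (fun X hX => ⟨hX.1, by have := hX.2; simp only [hρS'] at this; omega⟩)
  have hmfin : ∀ p : P, {X : Set P | p ∈ X ∧ m X ≠ 0}.Finite := fun p =>
    (hR.2 p).subset (fun X hX => ⟨hX.1, by have := hX.2; simp only [hm] at this; omega⟩)
  -- the new rank equation
  have heq' : ∀ I : Set P, IsIntervalPoset I →
      (M.rk I : ℤ) = (cntMult ρR' I : ℤ) - (cntMult ρS' I : ℤ) := by
    intro I hI
    have hIne : I.Nonempty := hI.2.1
    have h1 : cntMult ρR I = cntMult ρR' I + cntMult m I := by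
      have : ρR = fun X => ρR' X + m X := by
        funext X; simp only [hρR', hm]; omega
      rw [this]
      exact cntMult_add_of_finite hR'fin hmfin hIne
    have h2 : cntMult ρS I = cntMult ρS' I + cntMult m I := by
      have : ρS = fun X => ρS' X + m X := by
        funext X; simp only [hρS', hm]; omega
      rw [this]
      exact cntMult_add_of_finite hS'fin hmfin hIne
    have := heq I hI
    rw [h1, h2] at this
    push_cast at this ⊢
    linarith
  have hdecomp : IsRkDecomp M ρR' ρS' := ⟨⟨hR'int, hR'fin⟩, ⟨hS'int, hS'fin⟩, heq'⟩
  have hdisj : ∀ X : Set P, min (ρR' X) (ρS' X) = 0 := by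
    intro X; simp only [hρR', hρS', hm]; omega
  refine ⟨hdecomp, hdisj, ?_⟩
  intro τR τS hτ hτdisj
  obtain ⟨hτR, hτS, hτeq⟩ := hτ
  -- combined multisets
  have hcnt : ∀ I : Set P, IsIntervalPoset I →
      cntMult (fun X => τR X + ρS' X) I = cntMult (fun X => ρR' X + τS X) I := by
    intro I hI
    have hIne : I.Nonempty := hI.2.1
    rw [cntMult_add_of_finite hτR.2 hS'fin hIne,
      cntMult_add_of_finite hR'fin hτS.2 hIne]
    have h1 := hτeq I hI
    have h2 := heq' I hI
    omega
  have hAB : (fun X => τR X + ρS' X) = (fun X => ρR' X + τS X) := by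
    refine cntMult_eq_of_intervals ?_ ?_ ?_ ?_ hcnt
    · intro X hX
      by_cases h0 : τR X = 0
      · exact hS'int X (by omega)
      · exact hτR.1 X h0
    · intro p
      exact ((hτR.2 p).union (hS'fin p)).subset (fun X hX => by
        have h1 := hX.1; have h2 := hX.2
        by_cases h0 : τR X = 0
        · exact Or.inr ⟨h1, by omega⟩
        · exact Or.inl ⟨h1, h0⟩)
    · intro X hX
      by_cases h0 : ρR' X = 0
      · exact hτS.1 X (by omega)
      · exact hR'int X h0
    · intro p
      exact ((hR'fin p).union (hτS.2 p)).subset (fun X hX => by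
        have h1 := hX.1; have h2 := hX.2
        by_cases h0 : ρR' X = 0
        · exact Or.inr ⟨h1, by omega⟩
        · exact Or.inl ⟨h1, h0⟩)
  have hptw : ∀ X : Set P, τR X + ρS' X = ρR' X + τS X := fun X => congrFun hAB X
  constructor
  · funext X
    have h1 := hptw X
    have h2 := hτdisj X
    have h3 := hdisj X
    simp only [hρR', hρS', hm] at h1 h3 ⊢
    omega
  · funext X
    have h1 := hptw X
    have h2 := hτdisj X
    have h3 := hdisj X
    simp only [hρR', hρS', hm] at h1 h3 ⊢
    omega
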